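/- Let G be a connected graph and S ⊆ V(G) a longest path transversal such that S is a union of cliques V_x, x ∈ X. Suppose Q ⊆ S is a set such that for every x ∈ X, Q ∩ V_x ≠ ∅ and Q ∩ V_x dominates all vertices outside S that have a neighbor in S ∩ V_x. Then Q is a longest path transversal of G. -/
import Mathlib


open SimpleGraph

/-- `p` is a longest path in `G`: it is a path of maximum length among all paths of `G`. -/
def IsLongestPath {V : Type*} (G : SimpleGraph V) {u v : V} (p : G.Walk u v) : Prop :=
  p.IsPath ∧ ∀ ⦃a b : V⦄ (q : G.Walk a b), q.IsPath → q.length ≤ p.length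

/-- `S` is a longest path transversal of `G`: it meets every longest path. -/
def IsLPTransversal {V : Type*} (G : SimpleGraph V) (S : Set V) : Prop :=
  ∀ ⦃u v : V⦄ (p : G.Walk u v), IsLongestPath G p → ∃ x ∈ S, x ∈ p.support

/-- `A` dominates `B`: every vertex of `B` is in `A` or has a neighbor in `A`. -/
def Dominates {V : Type*} (G : SimpleGraph V) (A B : Set V) : Prop :=
  ∀ b ∈ B, b ∈ A ∨ ∃ a ∈ A, G.Adj a b

/-- Closed neighborhood `N[X]` of a set of vertices. -/
def closedNbhd {V : Type*} (G : SimpleGraph V) (X : Set V) : Set V :=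
  X ∪ {v | ∃ x ∈ X, G.Adj x v}

/-- `bd(X,Y)`: vertices of `X` having a neighbor in `Y`. -/
def bd {V : Type*} (G : SimpleGraph V) (X Y : Set V) : Set V :=
  {x ∈ X | ∃ y ∈ Y, G.Adj x y}

/-- `C` is (the vertex set of) a connected component of `G - M`. -/
def IsComponentOf {V : Type*} (G : SimpleGraph V) (M : Set V) (C : Set V) : Prop :=
  ∃ c ∉ M, C = {v | ∃ p : G.Walk v c, ∀ x ∈ p.support, x ∉ M}

/-- `M` is a monitor in `G`: for every component `C` of `G - M` some vertex of `M`
is complete to `C`. -/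
def IsMonitor {V : Type*} (G : SimpleGraph V) (M : Set V) : Prop :=
  ∀ C : Set V, IsComponentOf G M C → ∃ w ∈ M, ∀ c ∈ C, G.Adj w c

/-- `X` induces a path in `G`. -/
def IsInducedPath {V : Type*} (G : SimpleGraph V) (X : Set V) : Prop :=
  ∃ (n : ℕ) (f : SimpleGraph.pathGraph n ↪g G), Set.range f = X

/-- `X` induces a maximal induced path in `G`. -/
def IsMaximalInducedPath {V : Type*} (G : SimpleGraph V) (X : Set V) : Prop :=
  IsInducedPath G X ∧ ∀ Y : Set V, IsInducedPath G Y → X ⊆ Y → X = Y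

/-- The bull: a path 0-1-2-3 plus a vertex 4 adjacent to the middle vertices 1 and 2. -/
def bull : SimpleGraph (Fin 5) :=
  SimpleGraph.fromRel (fun i j => (i.val, j.val) ∈ [(0,1),(1,2),(2,3),(1,4),(2,4)])

/-- The chair: the claw with center 0 and leaves 1,2,3, with the edge to 3 subdivided by 4. -/
def chair : SimpleGraph (Fin 5) :=
  SimpleGraph.fromRel (fun i j => (i.val, j.val) ∈ [(0,1),(0,2),(0,4),(4,3)])

/-- A graph is chordal if it has no induced cycle of length at least four. -/
def IsChordal {V : Type*} (G : SimpleGraph V) : Prop :=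
  ∀ n : ℕ, 4 ≤ n → IsEmpty (SimpleGraph.cycleGraph n ↪g G)

/-- `Kₜ ⋈ K̄ₜ`: a clique of size `t` and an independent set of size `t` joined by
a perfect matching. -/
def kMatchK (t : ℕ) : SimpleGraph (Fin t ⊕ Fin t) :=
  SimpleGraph.fromRel (fun x y =>
    (∃ i j : Fin t, x = Sum.inl i ∧ y = Sum.inl j) ∨
    (∃ i : Fin t, x = Sum.inl i ∧ y = Sum.inr i))

lemma find_boundary' {V : Type*} {G : SimpleGraph V} (S : Set V) {u v : V} (p : G.Walk u v)
    {s : V} (hs : s ∈ p.support) (hsS : s ∈ S) :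
    u ∈ S ∨ ∃ d ∈ p.darts, d.fst ∉ S ∧ d.snd ∈ S := by
  induction p with
  | nil =>
    left
    simp only [SimpleGraph.Walk.support_nil, List.mem_singleton] at hs
    exact hs ▸ hsS
  | cons h rest ih =>
    rename_i a b c
    by_cases ha : a ∈ S
    · exact Or.inl ha
    · have hs' : s ∈ rest.support := by
        simp only [SimpleGraph.Walk.support_cons, List.mem_cons] at hs
        rcases hs with rfl | hs
        · exact absurd hsS ha
        · exact hs
      rcases ih hs' with hb | ⟨d, hd, h1, h2⟩
      · exact Or.inr ⟨⟨(a, b), h⟩, by simp [SimpleGraph.Walk.darts_cons], ha, hb⟩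
      · exact Or.inr ⟨d, by simp [SimpleGraph.Walk.darts_cons, hd], h1, h2⟩

lemma insert_vertex' {V : Type*} {G : SimpleGraph V} {u v : V} (p : G.Walk u v)
    (hp : p.IsPath) {q : V} (hq : q ∉ p.support) {d : G.Dart} (hd : d ∈ p.darts)
    (hqa : G.Adj d.fst q) (hqb : G.Adj q d.snd) :
    ∃ p' : G.Walk u v, p'.IsPath ∧ p'.length = p.length + 1 ∧
      ∀ x ∈ p'.support, x ∈ p.support ∨ x = q := by
  induction p with
  | nil => simp at hd
  | cons h rest ih =>
    rename_i a b c
    rw [SimpleGraph.Walk.cons_isPath_iff] at hp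
    simp only [SimpleGraph.Walk.support_cons, List.mem_cons, not_or] at hq
    simp only [SimpleGraph.Walk.darts_cons, List.mem_cons] at hd
    rcases hd with rfl | hd
    · refine ⟨SimpleGraph.Walk.cons hqa (SimpleGraph.Walk.cons hqb rest), ?_, ?_, ?_⟩
      · rw [SimpleGraph.Walk.cons_isPath_iff, SimpleGraph.Walk.cons_isPath_iff]
        refine ⟨⟨hp.1, hq.2⟩, ?_⟩
        simp only [SimpleGraph.Walk.support_cons, List.mem_cons, not_or]
        exact ⟨fun e => hq.1 e.symm, hp.2⟩
      · simp [SimpleGraph.Walk.length_cons]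
      · intro x hx
        simp only [SimpleGraph.Walk.support_cons, List.mem_cons] at hx ⊢
        tauto
    · rcases ih hp.1 hq.2 hd with ⟨p', h1, h2, h3⟩
      refine ⟨SimpleGraph.Walk.cons h p', ?_, ?_, ?_⟩
      · rw [SimpleGraph.Walk.cons_isPath_iff]
        refine ⟨h1, fun hmem => ?_⟩
        rcases h3 _ hmem with hm | rfl
        · exact hp.2 hm
        · exact hq.1 rfl
      · simp [SimpleGraph.Walk.length_cons, h2]
      · intro x hx
        simp only [SimpleGraph.Walk.support_cons, List.mem_cons] at hx ⊢
        rcases hx with rfl | hx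
        · tauto
        · rcases h3 _ hx with hm | rfl <;> tauto

/-- Refining a transversal which is a union of cliques: if `Q ⊆ S` meets every clique
`V_x` and `Q ∩ V_x` dominates the outside vertices with a neighbor in `S ∩ V_x`,
then `Q` is a longest path transversal. -/
theorem stmt_19 {V : Type*} [Fintype V] {ι : Type*} [Fintype ι]
    (G : SimpleGraph V) (hG : G.Connected)
    (Vx : ι → Set V) (hclique : ∀ x : ι, G.IsClique (Vx x))
    (S : Set V) (hS : S = ⋃ x : ι, Vx x) (hSlpt : IsLPTransversal G S)
    (Q : Set V) (hQS : Q ⊆ S)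
    (hQx : ∀ x : ι, (Q ∩ Vx x).Nonempty)
    (hdom : ∀ x : ι, Dominates G (Q ∩ Vx x) (bd G Sᶜ (S ∩ Vx x))) :
    IsLPTransversal G Q := by
  intro u v p hp
  by_contra hcon
  push_neg at hcon
  obtain ⟨s, hsS, hsp⟩ := hSlpt p hp
  rcases find_boundary' S p hsp hsS with huS | ⟨d, hd, hdf, hds⟩
  · -- u ∈ S : extend the path at u
    obtain ⟨x, hx⟩ : ∃ x, u ∈ Vx x := by
      rw [hS] at huS; exact Set.mem_iUnion.mp huS
    obtain ⟨q, hqQ, hqV⟩ := hQx x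
    have hqp : q ∉ p.support := hcon q hqQ
    have hne : q ≠ u := fun e => hqp (e ▸ p.start_mem_support)
    have hadj : G.Adj q u := hclique x hqV hx hne
    have : (SimpleGraph.Walk.cons hadj p).length ≤ p.length :=
      hp.2 _ (by rw [SimpleGraph.Walk.cons_isPath_iff]; exact ⟨hp.1, hqp⟩)
    simp [SimpleGraph.Walk.length_cons] at this
  · -- dart from a ∉ S to b ∈ S : detour through q
    obtain ⟨x, hx⟩ : ∃ x, d.snd ∈ Vx x := by
      rw [hS] at hds; exact Set.mem_iUnion.mp hds
    have hbd : d.fst ∈ bd G Sᶜ (S ∩ Vx x) :=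
      ⟨hdf, d.snd, ⟨hds, hx⟩, d.adj⟩
    rcases hdom x d.fst hbd with hmem | ⟨q, ⟨hqQ, hqV⟩, hadj⟩
    · exact hdf (hQS hmem.1)
    · have hqp : q ∉ p.support := hcon q hqQ
      have hne : q ≠ d.snd := fun e => hqp (e ▸ SimpleGraph.Walk.dart_snd_mem_support_of_mem_darts p hd)
      have hqb : G.Adj q d.snd := hclique x hqV hx hne
      obtain ⟨p', hp', hlen, -⟩ := insert_vertex' p hp.1 hqp hd hadj.symm hqb
      have := hp.2 p' hp'
      omega
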